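/- If I = {I_1, …, I_m} is an ICPIA for the set system S(M) = {S_1, …, S_m} of a binary matrix M, then for every collection of indices i_1, …, i_r, the cardinality of the intersection S_{i_1} ∩ ⋯ ∩ S_{i_r} equals the cardinality of the intersection I_{i_1} ∩ ⋯ ∩ I_{i_r}. -/

import Mathlib

/-- A binary matrix (rows `R`, columns `Fin n`, entries in `Bool`) has the
consecutive ones property: some permutation of the columns makes the ones in
every row consecutive. -/
def HasCOP {R : Type*} {n : ℕ} (M : R → Fin n → Bool) : Prop :=
  ∃ σ : Equiv.Perm (Fin n), ∀ (i : R) (a b c : Fin n), a ≤ b → b ≤ c →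
    M i (σ a) = true → M i (σ c) = true → M i (σ b) = true

/-- The set `S_i` of columns having a `1` in row `i`. -/
def rowSet {R : Type*} {n : ℕ} (M : R → Fin n → Bool) (i : R) : Set (Fin n) :=
  {j | M i j = true}

/-- The set `S_i` of columns having a `1` in row `i`, as a `Finset`. -/
def rowFinset {R : Type*} {n : ℕ} (M : R → Fin n → Bool) (i : R) : Finset (Fin n) :=
  Finset.univ.filter (fun j => M i j = true)

/-- `vert(c_k)`: vertices (rows) having a `1` in column `k`. -/
def vert {R : Type*} {n : ℕ} (M : R → Fin n → Bool) (k : Fin n) : Set R :=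
  {i | M i k = true}

/-- The submatrix `M \ D` obtained by deleting the rows in `D`. -/
def delRows {R : Type*} {n : ℕ} (M : R → Fin n → Bool) (D : Set R) :
    {i : R // i ∉ D} → Fin n → Bool :=
  fun i j => M i.1 j

/-- `M̃`: the `(n+m) × n` matrix obtained by stacking the `n × n` identity
matrix on top of `M`. -/
def augMatrix {m n : ℕ} (M : Fin m → Fin n → Bool) : Fin (n + m) → Fin n → Bool :=
  fun i j => Fin.addCases (fun i' : Fin n => decide (i' = j)) (fun i' : Fin m => M i' j) i

/-- The derived graph `G(M)`: one vertex per row, two distinct rows adjacent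
iff some column has a `1` in both. -/
def derivedGraph {R : Type*} {n : ℕ} (M : R → Fin n → Bool) : SimpleGraph R where
  Adj i j := i ≠ j ∧ ∃ k, M i k = true ∧ M j k = true
  symm := by
    constructor
    rintro i j ⟨hne, k, h1, h2⟩
    exact ⟨hne.symm, k, h2, h1⟩
  loopless := by constructor; rintro i ⟨h, -⟩; exact h rfl

/-- An interval graph: vertices can be assigned nonempty real intervals so
that distinct vertices are adjacent iff their intervals intersect. -/
def IsIntervalGraph {V : Type*} (G : SimpleGraph V) : Prop :=
  ∃ I : V → Set ℝ, (∀ v, (I v).Nonempty ∧ (I v).OrdConnected) ∧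
    ∀ u v : V, u ≠ v → (G.Adj u v ↔ (I u ∩ I v).Nonempty)

/-- A maximal clique: a clique not properly contained in another clique. -/
def IsMaximalClique {V : Type*} (G : SimpleGraph V) (Q : Set V) : Prop :=
  G.IsClique Q ∧ ∀ Q' : Set V, G.IsClique Q' → Q ⊆ Q' → Q' = Q

/-- A maximal clique of the induced subgraph `G[X]` (viewed as a set of
vertices of `G` contained in `X`). -/
def IsMaximalCliqueOn {V : Type*} (G : SimpleGraph V) (X Q : Set V) : Prop :=
  Q ⊆ X ∧ G.IsClique Q ∧ ∀ Q' : Set V, Q' ⊆ X → G.IsClique Q' → Q ⊆ Q' → Q' = Q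

/-- `N` is the clique matrix of `G`: its columns are pairwise distinct and the
column sets are exactly the maximal cliques of `G`. -/
def IsCliqueMatrix {V C : Type*} (G : SimpleGraph V) (N : V → C → Bool) : Prop :=
  Function.Injective (fun j : C => fun i : V => N i j) ∧
  ∀ Q : Set V, IsMaximalClique G Q ↔ ∃ j : C, Q = {i | N i j = true}

/-- An intersection cardinality preserving interval assignment: each row set
`S_i` gets an integer interval `[a i, b i]` with `|S_i ∩ S_j| = |I_i ∩ I_j|`
for all pairs `i, j`. -/
def IsICPIA {m n : ℕ} (M : Fin m → Fin n → Bool) (a b : Fin m → ℤ) : Prop :=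
  ∀ i j : Fin m,
    (rowFinset M i ∩ rowFinset M j).card =
    (Finset.Icc (a i) (b i) ∩ Finset.Icc (a j) (b j)).card

/-- `c` is an induced cycle of length `l` inside the induced subgraph `G[X]`:
`l ≥ 3` distinct vertices of `X`, cyclically consecutive ones adjacent, and
non-consecutive ones non-adjacent. -/
def IsInducedCycleOn {V : Type*} (G : SimpleGraph V) (X : Set V) (l : ℕ) (c : Fin l → V) : Prop :=
  3 ≤ l ∧ Function.Injective c ∧ (∀ i, c i ∈ X) ∧
  ∀ i j : Fin l, i ≠ j →
    (G.Adj (c i) (c j) ↔ (j.val = (i.val + 1) % l ∨ i.val = (j.val + 1) % l))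

/-- `G` has an induced cycle of length 4. -/
def HasInducedC4 {V : Type*} (G : SimpleGraph V) : Prop :=
  ∃ v1 v2 v3 v4 : V, v1 ≠ v2 ∧ v1 ≠ v3 ∧ v1 ≠ v4 ∧ v2 ≠ v3 ∧ v2 ≠ v4 ∧ v3 ≠ v4 ∧
    G.Adj v1 v2 ∧ G.Adj v2 v3 ∧ G.Adj v3 v4 ∧ G.Adj v4 v1 ∧ ¬ G.Adj v1 v3 ∧ ¬ G.Adj v2 v4

/-- A comparability graph: some partial order on the vertices makes distinct
vertices adjacent iff they are comparable. -/
def IsComparabilityGraph {V : Type*} (G : SimpleGraph V) : Prop :=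
  ∃ p : PartialOrder V, ∀ u v : V, u ≠ v → (G.Adj u v ↔ (p.le u v ∨ p.le v u))

/-!
The intersection of a finite family of intervals `I i = [a i, b i]` is the intersection of just
two of them: the one with the largest left endpoint `a p` and the one with the smallest right
endpoint `b q`. It
therefore suffices to show that `S p ∩ S q` lies in every other `S i`. If `I p ⊆ I i` or
`I q ⊆ I i`, equality of cardinalities turns the inclusion of intervals into an inclusion of
sets. Otherwise the intervals `I q, I i, I p` form a staircase, and inclusion–exclusion inside
`S i` gives `|S q ∩ S i ∩ S p| ≥ |I q ∩ I i| + |I i ∩ I p| - |I i| = |I q ∩ I p| = |S q ∩ S p|`.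
-/

open Finset

theorem Finset.Icc_inter_Icc {α : Type*} [Lattice α] [LocallyFiniteOrder α] [DecidableEq α]
    (a₁ b₁ a₂ b₂ : α) : Icc a₁ b₁ ∩ Icc a₂ b₂ = Icc (a₁ ⊔ a₂) (b₁ ⊓ b₂) :=
  coe_injective (by push_cast; exact Set.Icc_inter_Icc)

theorem Int.card_Icc_inter_Icc (a₁ b₁ a₂ b₂ : ℤ) :
    #(Icc a₁ b₁ ∩ Icc a₂ b₂) = (b₁ ⊓ b₂ + 1 - a₁ ⊔ a₂).toNat := by
  rw [Finset.Icc_inter_Icc, Int.card_Icc]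

section

variable {α : Type*} [DecidableEq α]

theorem Finset.subset_of_card_le_card_inter {s t : Finset α} (h : #s ≤ #(s ∩ t)) : s ⊆ t :=
  inter_eq_left.mp (eq_of_subset_of_card_le inter_subset_left h)

theorem Finset.card_inter_add_card_inter_le (s t u : Finset α) :
    #(s ∩ u) + #(u ∩ t) ≤ #u + #(s ∩ u ∩ t) := by
  have hunion : s ∩ u ∪ u ∩ t ⊆ u := union_subset inter_subset_right inter_subset_left
  have hinter : s ∩ u ∩ (u ∩ t) = s ∩ u ∩ t := by
    rw [← inter_assoc, inter_assoc s, inter_self]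
  have hcard := card_union_add_card_inter (s ∩ u) (u ∩ t)
  rw [hinter] at hcard
  have := card_le_card hunion
  omega

end

theorem Finset.inf'_eq_inf_of_inf_le {ι β : Type*} [SemilatticeInf β] {T : Finset ι}
    (hT : T.Nonempty) {f : ι → β} {p q : ι} (hp : p ∈ T) (hq : q ∈ T)
    (h : ∀ i ∈ T, f p ⊓ f q ≤ f i) : T.inf' hT f = f p ⊓ f q :=
  le_antisymm (le_inf (inf'_le f hp) (inf'_le f hq)) (le_inf' hT f h)

def IsICPIAFamily {ι α : Type*} [DecidableEq α] (S : ι → Finset α) (a b : ι → ℤ) : Prop :=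
  ∀ i j, #(S i ∩ S j) = #(Icc (a i) (b i) ∩ Icc (a j) (b j))

namespace IsICPIAFamily

variable {ι α : Type*} [DecidableEq α] {S : ι → Finset α} {a b : ι → ℤ}

theorem card_eq (h : IsICPIAFamily S a b) (i : ι) : #(S i) = #(Icc (a i) (b i)) := by
  simpa only [inter_self] using h i i

theorem subset_of_le_of_le (h : IsICPIAFamily S a b) {i j : ι} (ha : a j ≤ a i)
    (hb : b i ≤ b j) : S i ⊆ S j := by
  refine subset_of_card_le_card_inter ?_
  rw [card_eq h, h, Int.card_Icc, Int.card_Icc_inter_Icc]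
  omega

theorem inter_subset_of_staircase (h : IsICPIAFamily S a b) {l c r : ι} (hal : a l ≤ a c)
    (har : a c ≤ a r) (hbl : b l ≤ b c) (hbr : b c ≤ b r) : S l ∩ S r ⊆ S c := by
  refine subset_of_card_le_card_inter ?_
  have hie := card_inter_add_card_inter_le (S l) (S r) (S c)
  rw [card_eq h, h l c, h c r, Int.card_Icc, Int.card_Icc_inter_Icc,
    Int.card_Icc_inter_Icc] at hie
  rw [inter_right_comm, h, Int.card_Icc_inter_Icc]
  omega

theorem inter_subset (h : IsICPIAFamily S a b) {p q i : ι} (hp : a i ≤ a p)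
    (hq : b q ≤ b i) : S p ∩ S q ⊆ S i := by
  rcases le_total (b p) (b i) with hbp | hbp
  · exact inter_subset_left.trans (h.subset_of_le_of_le hp hbp)
  rcases le_total (a i) (a q) with haq | haq
  · exact inter_subset_right.trans (h.subset_of_le_of_le haq hq)
  rw [inter_comm]
  exact h.inter_subset_of_staircase haq hp hq hbp

theorem card_inf'_eq (h : IsICPIAFamily S a b) (T : Finset ι) (hT : T.Nonempty) :
    #(T.inf' hT S) = #(T.inf' hT fun i => Icc (a i) (b i)) := by
  obtain ⟨p, hpT, hp⟩ := exists_max_image T a hT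
  obtain ⟨q, hqT, hq⟩ := exists_min_image T b hT
  have hS : T.inf' hT S = S p ∩ S q :=
    inf'_eq_inf_of_inf_le hT hpT hqT fun i hi => h.inter_subset (hp i hi) (hq i hi)
  have hI : (T.inf' hT fun i => Icc (a i) (b i)) = Icc (a p) (b p) ∩ Icc (a q) (b q) :=
    inf'_eq_inf_of_inf_le hT hpT hqT fun i hi => by
      rw [inf_eq_inter, Finset.Icc_inter_Icc]
      exact Icc_subset_Icc (le_sup_of_le_left (hp i hi)) (inf_le_of_right_le (hq i hi))
  rw [hS, hI, h p q]

end IsICPIAFamily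

/-- If `I` is an ICPIA for `S(M)`, then for every (nonempty)
collection of indices, the intersection of the row sets and the intersection
of the assigned intervals have equal cardinality. -/
theorem stmt3 {m n : ℕ} (M : Fin m → Fin n → Bool) (a b : Fin m → ℤ)
    (h : IsICPIA M a b) (T : Finset (Fin m)) (hT : T.Nonempty) :
    (T.inf' hT (rowFinset M)).card =
    (T.inf' hT (fun i => Finset.Icc (a i) (b i))).card :=
  IsICPIAFamily.card_inf'_eq h T hT
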